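/- arXiv:2301.09236 — 3 statements merged into one kernel-verified Lean document; each statement's English description precedes it below -/
import Mathlib

section
/- For a sequence of 2N independent {0,1}-valued bit comparisons where each outcome equals the previous with probability p ≥ b, and with N ≥ (16b)/(b−a)² and N ≥ ((3a+b)/(b−a)²)·(m + 2 − log(b−a)) for 0 < a < b ≤ 1 with b−a ≥ 1/poly, the probability that the number of agreements is an even number at least N(a+b) is at least 1/4. -/
set_option maxHeartbeats 1000000

open scoped BigOperators

private lemma cheb_arith (a b p M : ℝ) (ha : 0 < a) (hab : a < b)
    (hpb : b ≤ p) (hp1 : p ≤ 1) (hNb : 16 * b ≤ M * (b - a) ^ 2) :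
    8 * p * (1 - p) ≤ M * (2*p - a - b) ^ 2 := by
  have hb0 : 0 < b := ha.trans hab
  have hp0 : 0 < p := hb0.trans_le hpb
  have hq0 : 0 ≤ 1 - p := by linarith
  have h1 : (b - a) ^ 2 ≤ (2*p - a - b)^2 := by nlinarith
  have key : 8 * p * (1 - p) * (b - a)^2 ≤ 16 * b * (2*p - a - b)^2 := by
    rcases le_or_gt p (2*b) with hc | hc
    · have e1 : p * (1 - p) ≤ 2 * b := by nlinarith
      have e2 : 8 * (p * (1-p)) * (b-a)^2 ≤ 8 * (2*b) * (b-a)^2 := by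
        nlinarith [sq_nonneg (b-a)]
      have e3 : 16 * b * (b-a)^2 ≤ 16 * b * (2*p-a-b)^2 :=
        mul_le_mul_of_nonneg_left h1 (by linarith)
      linarith
    · have e2 : p ≤ 2*p - a - b := by linarith
      have F1 : b * (p * p) ≤ b * ((2*p-a-b) * (2*p-a-b)) :=
        mul_le_mul_of_nonneg_left (mul_self_le_mul_self hp0.le e2) hb0.le
      have F2 : (b - a)^2 ≤ b^2 := by nlinarith
      have F3 : 8 * (p * (1-p)) * (b-a)^2 ≤ 8 * p * (b-a)^2 := by
        nlinarith [mul_nonneg hp0.le (sq_nonneg (b-a))]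
      have F4 : 8 * p * (b-a)^2 ≤ 8 * p * b^2 :=
        mul_le_mul_of_nonneg_left F2 (by linarith)
      have F5 : 8 * p * b^2 ≤ 16 * b * p^2 := by nlinarith [mul_pos hp0 hb0]
      nlinarith [F1]
  have hba2 : (0:ℝ) < (b-a)^2 := by nlinarith
  have big : (8 * p * (1 - p)) * (b-a)^2 ≤ (M * (2*p - a - b) ^ 2) * (b-a)^2 := by
    nlinarith [mul_le_mul_of_nonneg_right hNb (sq_nonneg (2*p-a-b)), key]
  exact le_of_mul_le_mul_right big hba2

/-- For `X ~ Binomial(2N, p)` with `p ≥ b`, if `N ≥ 16b/(b−a)²` and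
`N ≥ ((3a+b)/(b−a)²)(m + 2 − log(b−a))`, then the probability that `X` is an even
number at least `N(a+b)` is at least `1/4`. -/
theorem binomial_even_large_prob (m : ℕ) (N : ℕ) (a b p : ℝ)
    (ha : 0 < a) (hab : a < b) (hb : b ≤ 1)
    (hpb : b ≤ p) (hp1 : p ≤ 1)
    (hN1 : (16 * b) / (b - a) ^ 2 ≤ (N : ℝ))
    (hN2 : ((3 * a + b) / (b - a) ^ 2) * ((m : ℝ) + 2 - Real.logb 2 (b - a)) ≤ (N : ℝ)) :
    (1 : ℝ) / 4 ≤
      ∑ j ∈ Finset.range (2 * N + 1),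
        (if Even j ∧ (N : ℝ) * (a + b) ≤ (j : ℝ) then
          (Nat.choose (2 * N) j : ℝ) * p ^ j * (1 - p) ^ (2 * N - j)
        else 0) := by
  set n := 2 * N with hn
  set t : ℝ := (N:ℝ) * (a + b) with ht
  set f : ℕ → ℝ := fun j => (Nat.choose n j : ℝ) * p ^ j * (1 - p) ^ (n - j) with hf
  show (1:ℝ)/4 ≤ ∑ j ∈ Finset.range (n + 1), (if Even j ∧ t ≤ (j:ℝ) then f j else 0)
  have hba : 0 < b - a := by linarith
  have hb0 : 0 < b := ha.trans hab
  have hp0 : 0 < p := by linarith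
  have hq0 : 0 ≤ 1 - p := by linarith
  have hNpos : (0:ℝ) < N := by
    have : (0:ℝ) < 16 * b / (b - a) ^ 2 := by positivity
    linarith
  have hfpos : ∀ j, 0 ≤ f j := fun j => by
    simp only [hf]; positivity
  have hite : ∀ (c : Prop) (_ : Decidable c) (j : ℕ), (0:ℝ) ≤ ite c (f j) 0 := by
    intro c _ j; split
    · exact hfpos j
    · exact le_rfl
  -- total sum is 1
  have hsum1 : ∑ j ∈ Finset.range (n + 1), f j = 1 := by
    have h := add_pow p (1 - p) n
    rw [add_sub_cancel, one_pow] at h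
    calc ∑ j ∈ Finset.range (n + 1), f j
        = ∑ j ∈ Finset.range (n + 1), p ^ j * (1 - p) ^ (n - j) * (Nat.choose n j : ℝ) :=
          Finset.sum_congr rfl fun j _ => by simp only [hf]; ring
      _ = 1 := h.symm
  -- signed sum
  have hsigned : ∑ j ∈ Finset.range (n + 1), (-1 : ℝ) ^ j * f j = (1 - 2*p) ^ n := by
    have h := add_pow (-p) (1 - p) n
    have h2 : (-p + (1 - p)) = 1 - 2*p := by ring
    rw [h2] at h
    calc ∑ j ∈ Finset.range (n + 1), (-1 : ℝ) ^ j * f j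
        = ∑ j ∈ Finset.range (n + 1), (-p) ^ j * (1 - p) ^ (n - j) * (Nat.choose n j : ℝ) :=
          Finset.sum_congr rfl fun j _ => by
            rw [neg_pow]; simp only [hf]; ring
      _ = (1 - 2*p) ^ n := h.symm
  -- odd part ≤ 1/2
  have hodd : ∑ j ∈ Finset.range (n + 1), (if Odd j then f j else 0) ≤ 1 / 2 := by
    have hnn : (0:ℝ) ≤ (1 - 2*p) ^ n := by
      rw [hn, pow_mul]
      positivity
    have hcomb : (∑ j ∈ Finset.range (n + 1), f j)
        - (∑ j ∈ Finset.range (n + 1), (-1 : ℝ) ^ j * f j)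
        = 2 * ∑ j ∈ Finset.range (n + 1), (if Odd j then f j else 0) := by
      rw [← Finset.sum_sub_distrib, Finset.mul_sum]
      refine Finset.sum_congr rfl fun j _ => ?_
      rcases Nat.even_or_odd j with he | ho
      · rw [he.neg_one_pow, if_neg (Nat.not_odd_iff_even.mpr he)]; ring
      · rw [ho.neg_one_pow, if_pos ho]; ring
    rw [hsum1, hsigned] at hcomb
    linarith
  -- variance identity
  have hvar : ∑ j ∈ Finset.range (n + 1), ((n:ℝ) * p - (j:ℝ)) ^ 2 * f j
      = (n:ℝ) * p * (1 - p) := by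
    have h := bernsteinPolynomial.variance (R := ℝ) n
    have h2 := congrArg (Polynomial.eval p) h
    simp only [Polynomial.eval_finset_sum, Polynomial.eval_mul, Polynomial.eval_pow,
      Polynomial.eval_sub, Polynomial.eval_smul, Polynomial.eval_X, Polynomial.eval_natCast,
      Polynomial.eval_one, bernsteinPolynomial, nsmul_eq_mul] at h2
    rw [← h2]
  -- Chebyshev arithmetic
  have harith : 8 * p * (1 - p) ≤ (N:ℝ) * (2*p - a - b) ^ 2 := by
    apply cheb_arith a b p (N:ℝ) ha hab hpb hp1
    rw [div_le_iff₀ (by positivity)] at hN1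
    linarith
  -- lower tail ≤ 1/4
  have hdev : (0:ℝ) < (n:ℝ) * p - t := by
    rw [hn, ht]
    push_cast
    nlinarith
  have hlow : ∑ j ∈ Finset.range (n + 1), (if (j:ℝ) < t then f j else 0) ≤ 1 / 4 := by
    set d : ℝ := (n:ℝ) * p - t with hd
    have hkey : d ^ 2 * ∑ j ∈ Finset.range (n + 1), (if (j:ℝ) < t then f j else 0)
        ≤ (n:ℝ) * p * (1 - p) := by
      rw [← hvar, Finset.mul_sum]
      refine Finset.sum_le_sum fun j _ => ?_
      by_cases hj : (j:ℝ) < t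
      · rw [if_pos hj]
        have h1 : d ≤ (n:ℝ) * p - (j:ℝ) := by rw [hd]; linarith
        have h2 : d ^ 2 ≤ ((n:ℝ) * p - (j:ℝ)) ^ 2 := by nlinarith
        exact mul_le_mul_of_nonneg_right h2 (hfpos j)
      · rw [if_neg hj, mul_zero]
        exact mul_nonneg (sq_nonneg _) (hfpos j)
    have hd2 : (n:ℝ) * p * (1 - p) ≤ d ^ 2 / 4 := by
      have hdval : d = (N:ℝ) * (2*p - a - b) := by rw [hd, hn, ht]; push_cast; ring
      have hnval : ((n:ℕ):ℝ) = 2 * (N:ℝ) := by rw [hn]; push_cast; ring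
      rw [hdval, hnval]
      nlinarith [mul_le_mul_of_nonneg_left harith (le_of_lt hNpos)]
    have hSnn : 0 ≤ ∑ j ∈ Finset.range (n + 1), (if (j:ℝ) < t then f j else 0) :=
      Finset.sum_nonneg fun j _ => hite _ _ j
    have hd2pos : 0 < d ^ 2 := by positivity
    have hfin : d ^ 2 * (∑ j ∈ Finset.range (n + 1), (if (j:ℝ) < t then f j else 0))
        ≤ d ^ 2 * (1/4) := hkey.trans (hd2.trans_eq (by ring))
    exact le_of_mul_le_mul_left hfin hd2pos
  -- combine
  have hpoint : ∀ j ∈ Finset.range (n + 1),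
      f j ≤ (if Even j ∧ t ≤ (j:ℝ) then f j else 0)
        + ((if Odd j then f j else 0) + (if (j:ℝ) < t then f j else 0)) := by
    intro j _
    by_cases hc : Even j ∧ t ≤ (j:ℝ)
    · rw [if_pos hc]
      have h1 := hite (Odd j) inferInstance j
      have h2 := hite ((j:ℝ) < t) inferInstance j
      linarith
    · rw [if_neg hc]
      rcases Nat.even_or_odd j with he | ho
      · have hlt : (j:ℝ) < t := by
          by_contra hge
          exact hc ⟨he, not_lt.mp hge⟩
        rw [if_neg (Nat.not_odd_iff_even.mpr he), if_pos hlt]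
        linarith
      · rw [if_pos ho]
        have h2 := hite ((j:ℝ) < t) inferInstance j
        linarith
  have htotal : (1:ℝ) ≤ (∑ j ∈ Finset.range (n + 1), (if Even j ∧ t ≤ (j:ℝ) then f j else 0))
      + ((∑ j ∈ Finset.range (n + 1), (if Odd j then f j else 0))
        + ∑ j ∈ Finset.range (n + 1), (if (j:ℝ) < t then f j else 0)) := by
    rw [← Finset.sum_add_distrib, ← Finset.sum_add_distrib, ← hsum1]
    exact Finset.sum_le_sum hpoint
  linarith
end

section
/- Let (p_i)_{i∈I} be a finite family of reals in [0,1] with |I| ≤ 2^m, let (w_i)_{i∈I} be nonnegative weights, and suppose there exists an index 1 with p_1 ≥ b and w_1 ≥ 1/4, while for every i with p_i < a we have w_i ≤ exp(−N(b−a)²/(3a+b)) where N is large enough that 2^m·a·exp(−N(b−a)²/(3a+b)) < (b−a)/4. Then Σ_i p_i w_i > a·Σ_i w_i. -/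
open scoped BigOperators

/-- Weighted-average step in the Marriott–Watrous analysis: if one index has
`p ≥ b` and weight at least `1/4`, and every index with `p_i < a` has exponentially
small weight, then the weighted average of the `p_i` exceeds `a`. -/
theorem weighted_average_exceeds_guarantee {ι : Type*} [Fintype ι]
    (m : ℕ) (N a b : ℝ) (p w : ι → ℝ) (i0 : ι)
    (ha : 0 < a) (hab : a < b) (hb : b ≤ 1)
    (hcard : (Fintype.card ι : ℝ) ≤ 2 ^ m)
    (hp : ∀ i, 0 ≤ p i ∧ p i ≤ 1) (hw : ∀ i, 0 ≤ w i)
    (hp0 : b ≤ p i0) (hw0 : (1 : ℝ) / 4 ≤ w i0)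
    (hsmall : ∀ i, p i < a → w i ≤ Real.exp (-(N * (b - a) ^ 2 / (3 * a + b))))
    (hN : (2 : ℝ) ^ m * a * Real.exp (-(N * (b - a) ^ 2 / (3 * a + b))) < (b - a) / 4) :
    a * ∑ i, w i < ∑ i, p i * w i := by
  classical
  set ε := Real.exp (-(N * (b - a) ^ 2 / (3 * a + b))) with hε
  have hεpos : 0 < ε := Real.exp_pos _
  have key : 0 < ∑ i, (p i - a) * w i := by
    rw [← Finset.sum_filter_add_sum_filter_not Finset.univ (fun i => a ≤ p i)]
    have h1 : (b - a) / 4 ≤ ∑ i ∈ Finset.univ.filter (fun i => a ≤ p i), (p i - a) * w i := by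
      calc (b - a) / 4 = (b - a) * (1 / 4) := by ring
        _ ≤ (p i0 - a) * w i0 :=
          mul_le_mul (by linarith) hw0 (by norm_num) (by linarith)
        _ ≤ _ := Finset.single_le_sum (f := fun i => (p i - a) * w i)
            (fun i hi => by
              simp only [Finset.mem_filter] at hi
              exact mul_nonneg (by linarith [hi.2]) (hw i))
            (by simp only [Finset.mem_filter, Finset.mem_univ, true_and]; linarith)
    have h2 : -((b - a) / 4) <
        ∑ i ∈ Finset.univ.filter (fun i => ¬ a ≤ p i), (p i - a) * w i := by
      have hterm : ∀ i ∈ Finset.univ.filter (fun i => ¬ a ≤ p i),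
          -(a * ε) ≤ (p i - a) * w i := by
        intro i hi
        simp only [Finset.mem_filter, not_le] at hi
        have hwε : w i ≤ ε := hsmall i hi.2
        have h0 := (hp i).1
        nlinarith [hw i]
      calc -((b - a) / 4)
          < -((2:ℝ) ^ m * a * ε) := by linarith
        _ ≤ -((Finset.univ.filter (fun i => ¬ a ≤ p i)).card * (a * ε)) := by
            have hcard' : ((Finset.univ.filter (fun i => ¬ a ≤ p i)).card : ℝ)
                ≤ (2:ℝ) ^ m := by
              refine le_trans ?_ hcard
              exact_mod_cast Nat.cast_le.mpr (Finset.card_filter_le _ _)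
            nlinarith [mul_le_mul_of_nonneg_right hcard' (mul_pos ha hεpos).le]
        _ = ∑ _i ∈ Finset.univ.filter (fun i => ¬ a ≤ p i), -(a * ε) := by
            rw [Finset.sum_const, nsmul_eq_mul]; ring
        _ ≤ _ := Finset.sum_le_sum hterm
    linarith
  have : ∑ i, (p i - a) * w i = ∑ i, p i * w i - a * ∑ i, w i := by
    simp [sub_mul, Finset.sum_sub_distrib, Finset.mul_sum]
  linarith
end

section
/- Let |φ⟩ be a unit vector written as |φ⟩ = √(1−α)|u⟩ + √α|v⟩ with |u⟩, |v⟩ orthogonal unit vectors, and let U, U' be unitaries with U|u⟩ = U'|u⟩. Then the trace-norm distance ‖U|φ⟩⟨φ|U† − U'|φ⟩⟨φ|U'†‖₁ ≤ 2(α + 2√(α(1−α))) ≤ 6√α. -/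
open Matrix
open scoped ComplexOrder

/-- The trace (Schatten-1) norm of a complex matrix: the sum of its singular
values, i.e. of the square roots of the eigenvalues of `AᴴA`. -/
noncomputable def traceNorm {n : Type*} [Fintype n] [DecidableEq n]
    (A : Matrix n n ℂ) : ℝ :=
  ∑ i, Real.sqrt ((Matrix.posSemidef_conjTranspose_mul_self A).1.eigenvalues i)

/-!
Write `U φ = c + d` and `U' φ = c + d'` with `c = √(1-α) U u = √(1-α) U' u`, `d = √α U v` and
`d' = √α U' v`. With `e = d - d'`, the difference of the two projectors is
`(c e* + e c*) + (d d* - d' d'*)`, a sum of Hermitian matrices.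

The trace norm of a Hermitian `C` equals `Re tr (V C)` for the unitary `V = sign C`, while
`Re tr (V A) ≤ ‖A‖₁` for every unitary `V` (Cauchy–Schwarz in an eigenbasis of `Aᴴ A`). Hence
`‖A + B‖₁ ≤ ‖A‖₁ + ‖B‖₁` whenever `A + B` is Hermitian. Since `‖x y*‖₁ = ‖x‖ ‖y‖`, the difference
has trace norm at most `2 ‖c‖ ‖e‖ + ‖d‖² + ‖d'‖² ≤ 4 √(α(1-α)) + 2α`.
-/

open scoped MatrixOrder InnerProductSpace
open WithLp (toLp)

namespace Matrix

variable {𝕜 n : Type*} [RCLike 𝕜] [Fintype n]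

lemma star_dotProduct_eq_inner (x y : n → 𝕜) : star x ⬝ᵥ y = ⟪toLp 2 x, toLp 2 y⟫_𝕜 := by
  rw [dotProduct_comm]; rfl

lemma star_dotProduct_self_eq_norm_sq (x : n → 𝕜) : star x ⬝ᵥ x = (‖toLp 2 x‖ : 𝕜) ^ 2 := by
  rw [star_dotProduct_eq_inner, inner_self_eq_norm_sq_to_K]

lemma re_star_dotProduct_le (x y : n → 𝕜) :
    RCLike.re (star x ⬝ᵥ y) ≤ ‖toLp 2 x‖ * ‖toLp 2 y‖ := by
  rw [star_dotProduct_eq_inner]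
  exact re_inner_le_norm _ _

lemma norm_toLp_eq_one {x : n → 𝕜} (hx : star x ⬝ᵥ x = 1) : ‖toLp 2 x‖ = 1 := by
  rw [star_dotProduct_self_eq_norm_sq] at hx
  exact (pow_eq_one_iff_of_nonneg (norm_nonneg _) two_ne_zero).mp (by exact_mod_cast hx)

lemma mul_vecMulVec_star_mul_conjTranspose (U : Matrix n n 𝕜) (x : n → 𝕜) :
    U * vecMulVec x (star x) * Uᴴ = vecMulVec (U *ᵥ x) (star (U *ᵥ x)) := by
  rw [mul_vecMulVec, vecMulVec_mul, star_mulVec]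

variable [DecidableEq n]

lemma star_mulVec_dotProduct_mulVec {U : Matrix n n 𝕜} (hU : U ∈ unitaryGroup n 𝕜)
    (x y : n → 𝕜) : star (U *ᵥ x) ⬝ᵥ (U *ᵥ y) = star x ⬝ᵥ y := by
  rw [star_mulVec, ← dotProduct_mulVec, mulVec_mulVec, ← star_eq_conjTranspose,
    (mem_unitaryGroup_iff').mp hU, one_mulVec]

lemma norm_toLp_mulVec {U : Matrix n n 𝕜} (hU : U ∈ unitaryGroup n 𝕜) (x : n → 𝕜) :
    ‖toLp 2 (U *ᵥ x)‖ = ‖toLp 2 x‖ := by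
  have h := star_mulVec_dotProduct_mulVec hU x x
  rw [star_dotProduct_self_eq_norm_sq, star_dotProduct_self_eq_norm_sq] at h
  exact (pow_left_inj₀ (norm_nonneg _) (norm_nonneg _) two_ne_zero).mp (by exact_mod_cast h)

lemma trace_eq_sum_star_dotProduct_mulVec {ι : Type*} [Fintype ι] (M : Matrix n n 𝕜)
    (b : OrthonormalBasis ι 𝕜 (EuclideanSpace 𝕜 n)) :
    M.trace = ∑ i, star (b i).ofLp ⬝ᵥ (M *ᵥ (b i).ofLp) := by
  rw [← trace_toLin_eq M (PiLp.basisFun 2 𝕜 n), ← toLpLin_eq_toLin,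
    LinearMap.trace_eq_sum_inner _ b]
  simp [star_dotProduct_eq_inner, toLpLin_apply]

lemma IsHermitian.trace_cfc {A : Matrix n n 𝕜} (hA : A.IsHermitian) (f : ℝ → ℝ) :
    (cfc f A).trace = ∑ i, (f (hA.eigenvalues i) : 𝕜) := by
  rw [hA.cfc_eq, IsHermitian.cfc, Unitary.conjStarAlgAut_apply, trace_mul_cycle,
    Unitary.coe_star_mul_self, one_mul, trace_diagonal]
  rfl

end Matrix

section TraceNorm

variable {n : Type*} [Fintype n] [DecidableEq n]

lemma traceNorm_eq_re_trace_abs (A : Matrix n n ℂ) : traceNorm A = (CFC.abs A).trace.re := by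
  have hM := posSemidef_conjTranspose_mul_self A
  rw [CFC.abs, star_eq_conjTranspose, CFC.sqrt_eq_real_sqrt _ hM.nonneg, cfcₙ_eq_cfc,
    hM.1.trace_cfc, traceNorm]
  simp

lemma re_trace_mul_le_traceNorm {V : Matrix n n ℂ} (hV : V ∈ unitaryGroup n ℂ)
    (A : Matrix n n ℂ) : (V * A).trace.re ≤ traceNorm A := by
  have hM := posSemidef_conjTranspose_mul_self A
  set b := hM.1.eigenvectorBasis
  rw [trace_eq_sum_star_dotProduct_mulVec _ b, Complex.re_sum, traceNorm]
  refine Finset.sum_le_sum fun i _ => ?_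
  set p := (b i).ofLp
  have hp : ‖toLp 2 p‖ = 1 := b.orthonormal.1 i
  have hAp : ‖toLp 2 (A *ᵥ p)‖ = Real.sqrt (hM.1.eigenvalues i) := by
    have h : star (A *ᵥ p) ⬝ᵥ (A *ᵥ p) = hM.1.eigenvalues i := by
      rw [star_mulVec, ← dotProduct_mulVec, mulVec_mulVec, hM.1.mulVec_eigenvectorBasis,
        dotProduct_smul, star_dotProduct_self_eq_norm_sq, hp]
      simp
    rw [star_dotProduct_self_eq_norm_sq] at h
    rw [← Real.sqrt_sq (norm_nonneg _)]
    exact congrArg Real.sqrt (Complex.ofReal_injective (by simpa using h))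
  calc (star p ⬝ᵥ ((V * A) *ᵥ p)).re = (star (Vᴴ *ᵥ p) ⬝ᵥ (A *ᵥ p)).re := by
        rw [← mulVec_mulVec, dotProduct_mulVec, star_mulVec, conjTranspose_conjTranspose]
    _ ≤ ‖toLp 2 (Vᴴ *ᵥ p)‖ * ‖toLp 2 (A *ᵥ p)‖ := re_star_dotProduct_le (𝕜 := ℂ) _ _
    _ = Real.sqrt (hM.1.eigenvalues i) := by
        rw [norm_toLp_mulVec (star_eq_conjTranspose V ▸ Unitary.star_mem hV), hp, hAp, one_mul]

lemma exists_unitary_traceNorm_eq {C : Matrix n n ℂ} (hC : C.IsHermitian) :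
    ∃ V ∈ unitaryGroup n ℂ, traceNorm C = (V * C).trace.re := by
  let s : ℝ → ℝ := fun t => if 0 ≤ t then 1 else -1
  have hs : ContinuousOn s (spectrum ℝ C) := C.finite_real_spectrum.continuousOn s
  refine ⟨cfc s C, (cfc_unitary_iff s C hC.isSelfAdjoint).2 fun t _ => ?_, ?_⟩
  · by_cases ht : 0 ≤ t <;> simp [s, ht]
  · have hsC : cfc (fun t => s t * t) C = cfc (‖·‖) C := cfc_congr fun t _ => by
      by_cases ht : 0 ≤ t <;> simp [s, ht, abs_of_nonneg, abs_of_neg, not_le.mp]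
    rw [cfc_mul s (fun t => t) C, cfc_id' ℝ C] at hsC
    rw [hsC, ← CFC.abs_eq_cfc_norm C hC.isSelfAdjoint, traceNorm_eq_re_trace_abs]

lemma traceNorm_add_le_of_isHermitian {A B : Matrix n n ℂ} (h : (A + B).IsHermitian) :
    traceNorm (A + B) ≤ traceNorm A + traceNorm B := by
  obtain ⟨V, hV, hAB⟩ := exists_unitary_traceNorm_eq h
  rw [hAB, mul_add, trace_add, Complex.add_re]
  exact add_le_add (re_trace_mul_le_traceNorm hV A) (re_trace_mul_le_traceNorm hV B)

lemma traceNorm_vecMulVec (x y : n → ℂ) :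
    traceNorm (vecMulVec x (star y)) = ‖toLp 2 x‖ * ‖toLp 2 y‖ := by
  rcases eq_or_ne y 0 with rfl | hy
  · simp [traceNorm_eq_re_trace_abs]
  have hy' : ‖toLp 2 y‖ ≠ 0 := by simpa using hy
  set r : ℝ := ‖toLp 2 x‖ / ‖toLp 2 y‖
  have habs : CFC.abs (vecMulVec x (star y)) = r • vecMulVec y (star y) := by
    refine CFC.sqrt_unique ?_ ((posSemidef_vecMulVec_self_star y).smul (by positivity)).nonneg
    rw [star_eq_conjTranspose, conjTranspose_vecMulVec, star_star, vecMulVec_mul_vecMulVec,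
      smul_mul_smul_comm, vecMulVec_mul_vecMulVec, star_dotProduct_self_eq_norm_sq,
      star_dotProduct_self_eq_norm_sq, vecMulVec_smul, vecMulVec_smul,
      RCLike.ofReal_eq_complex_ofReal, ← smul_assoc, Complex.real_smul]
    congr 1
    simp only [r]
    push_cast
    field_simp
  rw [traceNorm_eq_re_trace_abs, habs, trace_smul, trace_vecMulVec, dotProduct_comm,
    star_dotProduct_self_eq_norm_sq, RCLike.ofReal_eq_complex_ofReal]
  simp only [r, Complex.real_smul]
  norm_cast
  field_simp

lemma traceNorm_vecMulVec_add_sub_vecMulVec_add_le (c d d' : n → ℂ) :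
    traceNorm (vecMulVec (c + d) (star (c + d)) - vecMulVec (c + d') (star (c + d'))) ≤
      2 * ‖toLp 2 c‖ * ‖toLp 2 (d - d')‖ + ‖toLp 2 d‖ ^ 2 + ‖toLp 2 d'‖ ^ 2 := by
  set e := d - d'
  have hsplit : vecMulVec (c + d) (star (c + d)) - vecMulVec (c + d') (star (c + d')) =
      (vecMulVec c (star e) + vecMulVec e (star c)) +
        (vecMulVec d (star d) + vecMulVec (-d') (star d')) := by
    simp only [e, star_add, star_sub, vecMulVec_add, add_vecMulVec, vecMulVec_sub, sub_vecMulVec,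
      neg_vecMulVec]
    abel
  have hcross : (vecMulVec c (star e) + vecMulVec e (star c)).IsHermitian := by
    simp [IsHermitian, add_comm]
  have hdiag : (vecMulVec d (star d) + vecMulVec (-d') (star d')).IsHermitian := by
    rw [neg_vecMulVec]
    exact (posSemidef_vecMulVec_self_star d).1.add (posSemidef_vecMulVec_self_star d').1.neg
  have hcross_le := traceNorm_add_le_of_isHermitian hcross
  have hdiag_le := traceNorm_add_le_of_isHermitian hdiag
  rw [traceNorm_vecMulVec, traceNorm_vecMulVec] at hcross_le hdiag_le
  rw [hsplit]
  calc _ ≤ _ := traceNorm_add_le_of_isHermitian (hcross.add hdiag)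
    _ ≤ _ := add_le_add hcross_le hdiag_le
    _ = _ := by rw [WithLp.toLp_neg, norm_neg]; ring

end TraceNorm

theorem one_query_hybrid_bound_general {n : Type*} [Fintype n] [DecidableEq n]
    (α : ℝ) (hα0 : 0 ≤ α) (hα1 : α ≤ 1)
    (u v : n → ℂ) (hu : star u ⬝ᵥ u = 1) (hv : star v ⬝ᵥ v = 1)
    (U U' : Matrix n n ℂ)
    (hU : U ∈ Matrix.unitaryGroup n ℂ) (hU' : U' ∈ Matrix.unitaryGroup n ℂ)
    (hagree : U.mulVec u = U'.mulVec u)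
    (φ : n → ℂ)
    (hφ : φ = (Real.sqrt (1 - α) : ℂ) • u + (Real.sqrt α : ℂ) • v) :
    traceNorm (U * Matrix.vecMulVec φ (star φ) * Uᴴ
        - U' * Matrix.vecMulVec φ (star φ) * U'ᴴ)
      ≤ 2 * (α + 2 * Real.sqrt (α * (1 - α))) ∧
    2 * (α + 2 * Real.sqrt (α * (1 - α))) ≤ 6 * Real.sqrt α := by
  set a := Real.sqrt (1 - α)
  set b := Real.sqrt α
  have ha : 0 ≤ a := Real.sqrt_nonneg _
  have hb : 0 ≤ b := Real.sqrt_nonneg _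
  have hnorm {W : Matrix n n ℂ} (hW : W ∈ unitaryGroup n ℂ) {z : n → ℂ} (hz : star z ⬝ᵥ z = 1)
      {r : ℝ} (hr : 0 ≤ r) : ‖toLp 2 ((r : ℂ) • W *ᵥ z)‖ = r := by
    rw [WithLp.toLp_smul, norm_smul, norm_toLp_mulVec hW, norm_toLp_eq_one hz, Complex.norm_real,
      Real.norm_of_nonneg hr, mul_one]
  have hdiff : ‖toLp 2 ((b : ℂ) • U *ᵥ v - (b : ℂ) • U' *ᵥ v)‖ ≤ 2 * b := by
    rw [WithLp.toLp_sub]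
    exact (norm_sub_le _ _).trans_eq (by rw [hnorm hU hv hb, hnorm hU' hv hb, two_mul])
  refine ⟨?_, ?_⟩
  · rw [mul_vecMulVec_star_mul_conjTranspose, mul_vecMulVec_star_mul_conjTranspose, hφ,
      mulVec_add, mulVec_add, mulVec_smul, mulVec_smul, mulVec_smul, mulVec_smul, ← hagree]
    refine (traceNorm_vecMulVec_add_sub_vecMulVec_add_le _ _ _).trans ?_
    rw [hnorm hU hu ha, hnorm hU hv hb, hnorm hU' hv hb, Real.sqrt_mul hα0, Real.sq_sqrt hα0]
    linarith [mul_le_mul_of_nonneg_left hdiff ha]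
  · have hαb : α ≤ b := Real.le_sqrt_of_sq_le (by nlinarith)
    have hsq : Real.sqrt (α * (1 - α)) ≤ b := Real.sqrt_le_sqrt (by nlinarith)
    linarith

/-- One-query hybrid bound: for `|φ⟩ = √(1−α)|u⟩ + √α|v⟩` with `u ⊥ v` unit
vectors, and unitaries `U, U'` agreeing on `|u⟩`,
`‖U|φ⟩⟨φ|U† − U'|φ⟩⟨φ|U'†‖₁ ≤ 2(α + 2√(α(1−α))) ≤ 6√α`. -/
theorem one_query_hybrid_bound {n : Type*} [Fintype n] [DecidableEq n]
    (α : ℝ) (hα0 : 0 ≤ α) (hα1 : α ≤ 1)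
    (u v : n → ℂ) (hu : star u ⬝ᵥ u = 1) (hv : star v ⬝ᵥ v = 1)
    (huv : star u ⬝ᵥ v = 0)
    (U U' : Matrix n n ℂ)
    (hU : U ∈ Matrix.unitaryGroup n ℂ) (hU' : U' ∈ Matrix.unitaryGroup n ℂ)
    (hagree : U.mulVec u = U'.mulVec u)
    (φ : n → ℂ)
    (hφ : φ = (Real.sqrt (1 - α) : ℂ) • u + (Real.sqrt α : ℂ) • v) :
    traceNorm (U * Matrix.vecMulVec φ (star φ) * Uᴴ
        - U' * Matrix.vecMulVec φ (star φ) * U'ᴴ)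
      ≤ 2 * (α + 2 * Real.sqrt (α * (1 - α))) ∧
    2 * (α + 2 * Real.sqrt (α * (1 - α))) ≤ 6 * Real.sqrt α :=
  one_query_hybrid_bound_general α hα0 hα1 u v hu hv U U' hU hU' hagree φ hφ
end
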